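/- Let M > 1. For (x, y) ∈ (0,1) × (0,1), the inequality y(1 − y) / (x + y − 2xy − 1)² > M holds if and only if either ( 0 < y < 1/(1+M) and γ₀(y) < x < 1 ) or ( M/(1+M) < y < 1 and 0 < x < γ₀(y) ), where γ₀(y) = 1 − ( √((1/y − 1)/M) − 1 ) / (1/y − 2). -/

import Mathlib

/-!
Write `d = xy + (1 - x)(1 - y)` for the Bradley–Terry normaliser, so that
`x + y - 2xy - 1 = -d` and the inequality reads `d < s` with `s = √(y(1 - y)/M)`.
Since `d = 1 - y - x(1 - 2y)` is affine in `x`, for `y ≠ 1/2` this is a bound on `x` by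
`(1 - y - s)/(1 - 2y)`, which is `γ₀(y)` after simplifying the square root. The bound on `y`
comes from `d ≥ min(y, 1 - y)`: then `d < s` forces `y < 1/(1 + M)` or `1 - y < M/(1 + M)`,
and in particular `y ≠ 1/2` because `M > 1`.
-/

open Set

namespace BradleyTerry

def btDenom (x y : ℝ) : ℝ := x * y + (1 - x) * (1 - y)

variable {x y M : ℝ}

lemma btDenom_pos (hx : x ∈ Ioo (0 : ℝ) 1) (hy : y ∈ Ioo (0 : ℝ) 1) : 0 < btDenom x y :=
  add_pos (mul_pos hx.1 hy.1) (mul_pos (sub_pos.2 hx.2) (sub_pos.2 hy.2))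

lemma le_btDenom (hx : x ≤ 1) (hy : y ≤ 1 / 2) : y ≤ btDenom x y := by
  unfold btDenom
  nlinarith [mul_nonneg (sub_nonneg.2 hx) (by linarith : (0 : ℝ) ≤ 1 - 2 * y)]

lemma one_sub_lt_btDenom (hx : 0 < x) (hy : 1 / 2 < y) : 1 - y < btDenom x y := by
  unfold btDenom
  nlinarith [mul_pos hx (by linarith : (0 : ℝ) < 2 * y - 1)]

lemma lt_div_sq_iff_btDenom_lt_sqrt (hM : 0 < M) (hx : x ∈ Ioo (0 : ℝ) 1)
    (hy : y ∈ Ioo (0 : ℝ) 1) :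
    M < y * (1 - y) / (x + y - 2 * x * y - 1) ^ 2 ↔ btDenom x y < √(y * (1 - y) / M) := by
  have hd := btDenom_pos hx hy
  rw [show (x + y - 2 * x * y - 1) ^ 2 = btDenom x y ^ 2 by unfold btDenom; ring,
    lt_div_iff₀ (pow_pos hd 2), Real.lt_sqrt hd.le, lt_div_iff₀ hM, mul_comm]

lemma lt_sqrt_iff_lt_one_div_one_add (hM : 0 < M) (hy : 0 < y) :
    y < √(y * (1 - y) / M) ↔ y < 1 / (1 + M) := by
  rw [Real.lt_sqrt hy.le, lt_div_iff₀ hM, lt_div_iff₀ (by linarith)]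
  constructor <;> intro h <;> nlinarith

lemma one_sub_lt_sqrt_iff_div_one_add_lt (hM : 0 < M) (hy : y < 1) :
    1 - y < √(y * (1 - y) / M) ↔ M / (1 + M) < y := by
  rw [Real.lt_sqrt (by linarith), lt_div_iff₀ hM, div_lt_iff₀ (by linarith)]
  constructor <;> intro h <;> nlinarith

lemma sqrt_one_div_sub_one_div (hy : 0 < y) (M : ℝ) :
    √((1 / y - 1) / M) = √(y * (1 - y) / M) / y := by
  rw [show (1 / y - 1) / M = y * (1 - y) / M / y ^ 2 by field_simp,
    Real.sqrt_div' _ (sq_nonneg y), Real.sqrt_sq hy.le]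

lemma one_sub_div_one_div_sub_two (hy : y ≠ 0) (hy' : y ≠ 1 / 2) (s : ℝ) :
    1 - (s / y - 1) / (1 / y - 2) = (1 - y - s) / (1 - 2 * y) := by
  have h : 1 - 2 * y ≠ 0 := fun h => hy' (by linarith)
  rw [show 1 / y - 2 = (1 - 2 * y) / y by field_simp, div_sub_one hy,
    div_div_div_cancel_right₀ hy, one_sub_div h]
  ring

lemma div_lt_iff_btDenom_lt (hy : y < 1 / 2) (s : ℝ) :
    (1 - y - s) / (1 - 2 * y) < x ↔ btDenom x y < s := by
  rw [div_lt_iff₀ (by linarith), btDenom]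
  constructor <;> intro h <;> linarith

lemma lt_div_iff_btDenom_lt (hy : 1 / 2 < y) (s : ℝ) :
    x < (1 - y - s) / (1 - 2 * y) ↔ btDenom x y < s := by
  rw [lt_div_iff_of_neg (by linarith), btDenom]
  constructor <;> intro h <;> linarith

end BradleyTerry

open BradleyTerry

theorem stmt_8 (M : ℝ) (hM : 1 < M)
    (γ₀ : ℝ → ℝ)
    (hγ₀ : ∀ y : ℝ, γ₀ y = 1 - (Real.sqrt ((1 / y - 1) / M) - 1) / (1 / y - 2)) :
    ∀ x ∈ Ioo (0 : ℝ) 1, ∀ y ∈ Ioo (0 : ℝ) 1,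
      (y * (1 - y) / (x + y - 2 * x * y - 1) ^ 2 > M ↔
        (0 < y ∧ y < 1 / (1 + M) ∧ γ₀ y < x ∧ x < 1) ∨
        (M / (1 + M) < y ∧ y < 1 ∧ 0 < x ∧ x < γ₀ y)) := by
  intro x hx y hy
  have hM0 : 0 < M := by linarith
  have hlow : 1 / (1 + M) < 1 / 2 := by rw [div_lt_div_iff₀] <;> linarith
  have hhigh : 1 / 2 < M / (1 + M) := by rw [div_lt_div_iff₀] <;> linarith
  have hγ : y ≠ 1 / 2 → γ₀ y = (1 - y - √(y * (1 - y) / M)) / (1 - 2 * y) := fun hy' => by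
    rw [hγ₀, sqrt_one_div_sub_one_div hy.1, one_sub_div_one_div_sub_two hy.1.ne' hy']
  rw [gt_iff_lt, lt_div_sq_iff_btDenom_lt_sqrt hM0 hx hy]
  rcases le_or_gt y (1 / 2) with hle | hgt
  · have hsmall : btDenom x y < √(y * (1 - y) / M) → y < 1 / (1 + M) := fun h =>
      (lt_sqrt_iff_lt_one_div_one_add hM0 hy.1).1 ((le_btDenom hx.2.le hle).trans_lt h)
    constructor
    · intro h
      have hy' := hsmall h
      rw [hγ (hy'.trans hlow).ne, div_lt_iff_btDenom_lt (hy'.trans hlow)]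
      exact Or.inl ⟨hy.1, hy', h, hx.2⟩
    · rintro (⟨-, hy', hγx, -⟩ | ⟨hy', -⟩)
      · rwa [hγ (hy'.trans hlow).ne, div_lt_iff_btDenom_lt (hy'.trans hlow)] at hγx
      · linarith
  · have hlarge : btDenom x y < √(y * (1 - y) / M) → M / (1 + M) < y := fun h =>
      (one_sub_lt_sqrt_iff_div_one_add_lt hM0 hy.2).1 ((one_sub_lt_btDenom hx.1 hgt).trans h)
    rw [hγ hgt.ne', lt_div_iff_btDenom_lt hgt]
    refine ⟨fun h => Or.inr ⟨hlarge h, hy.2, hx.1, h⟩, ?_⟩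
    rintro (⟨-, hy', -⟩ | ⟨-, -, -, h⟩)
    · linarith
    · exact h
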